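/- arXiv:2110.08563 — 6 statements merged into one kernel-verified Lean document; each statement's English description precedes it below -/
import Mathlib

section
/- Let $D$ be a divergence satisfying: (D4) $D(Q_\mathcal{E}\|P_\mathcal{E})\le D(Q\|P)$ for any sub-$\sigma$-algebra $\mathcal{E}$, and (D5) $D(Q_\mathcal{E}\|P_\mathcal{E})=D(Q\|P)$ whenever $dQ_\mathcal{E}/dP_\mathcal{E}=dQ/dP$ a.e. Fix $\eta>0$, a bounded measurable $\pi:\Theta\to\mathbb{R}$, a sub-$\sigma$-algebra $\mathcal{E}$, and set $\bar\pi = \mathbb{E}_P[\pi\mid\mathcal{E}]$. Then $\inf\{\mathbb{E}_Q[\bar\pi] : D(Q\|P)\le\eta\} \ge \inf\{\mathbb{E}_Q[\pi] : D(Q\|P)\le\eta\}$. -/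
/-!
Given `Q` in the divergence ball, let `Q'` be the measure with density `d(Q|_m)/d(P|_m)` with
respect to `P`. It agrees with `Q` on `m` and its density is that of the restrictions, so D5 and
D4 give `D(Q'‖P) = D(Q|_m‖P|_m) ≤ D(Q‖P)`. As the density is `m`-measurable,
`E_Q[π̄] = E_{Q'}[π̄] = E_{Q'}[π]`: every value on the left is attained on the right.
-/

open MeasureTheory
open scoped ENNReal

namespace MeasureTheory

variable {Ω : Type*} {m m0 : MeasurableSpace Ω}

lemma integral_eq_of_trim_eq {μ ν : Measure Ω} (hm : m ≤ m0) (hμν : μ.trim hm = ν.trim hm)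
    {f : Ω → ℝ} (hf : StronglyMeasurable[m] f) : ∫ ω, f ω ∂μ = ∫ ω, f ω ∂ν := by
  rw [integral_trim hm hf, hμν, ← integral_trim hm hf]

lemma isProbabilityMeasure_of_trim_eq {μ ν : Measure Ω} [IsProbabilityMeasure ν] (hm : m ≤ m0)
    (hμν : μ.trim hm = ν.trim hm) : IsProbabilityMeasure μ := by
  constructor
  rw [← trim_measurableSet_eq hm MeasurableSet.univ, hμν,
    trim_measurableSet_eq hm MeasurableSet.univ, measure_univ]

lemma trim_withDensity_rnDeriv_trim {P Q : Measure Ω} (hm : m ≤ m0) [SigmaFinite (Q.trim hm)]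
    [SigmaFinite (P.trim hm)] (hQP : Q ≪ P) :
    (P.withDensity ((Q.trim hm).rnDeriv (P.trim hm))).trim hm = Q.trim hm := by
  rw [trim_withDensity hm (Measure.measurable_rnDeriv _ _),
    Measure.withDensity_rnDeriv_eq _ _ (hQP.trim hm)]

lemma integral_condExp_withDensity {P : Measure Ω} (hm : m ≤ m0) [SigmaFinite (P.trim hm)]
    {g : Ω → ℝ≥0∞} (hg : Measurable[m] g) (hg_lt_top : ∀ᵐ ω ∂P, g ω < ∞)
    {f : Ω → ℝ} (hf : Integrable f P) (hgf : Integrable (fun ω => (g ω).toReal * f ω) P) :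
    ∫ ω, (P[f|m]) ω ∂(P.withDensity g) = ∫ ω, f ω ∂(P.withDensity g) := by
  have hg0 : Measurable g := hg.mono hm le_rfl
  rw [integral_withDensity_eq_integral_toReal_smul hg0 hg_lt_top,
    integral_withDensity_eq_integral_toReal_smul hg0 hg_lt_top]
  calc ∫ ω, (g ω).toReal • (P[f|m]) ω ∂P
      = ∫ ω, (P[fun ω => (g ω).toReal * f ω|m]) ω ∂P :=
        integral_congr_ae
          (condExp_mul_of_stronglyMeasurable_left hg.ennreal_toReal.stronglyMeasurable hgf hf).symm
    _ = ∫ ω, (g ω).toReal • f ω ∂P := integral_condExp hm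

lemma integral_condExp_eq_integral_withDensity_rnDeriv_trim {P Q : Measure Ω} [IsFiniteMeasure P]
    [IsFiniteMeasure Q] (hm : m ≤ m0) (hQP : Q ≪ P) {f : Ω → ℝ} {C : ℝ}
    (hf : AEStronglyMeasurable f P) (hfC : ∀ᵐ ω ∂P, ‖f ω‖ ≤ C) :
    ∫ ω, (P[f|m]) ω ∂Q = ∫ ω, f ω ∂(P.withDensity ((Q.trim hm).rnDeriv (P.trim hm))) := by
  have hg_int : Integrable (fun ω => ((Q.trim hm).rnDeriv (P.trim hm) ω).toReal) P :=
    integrable_of_integrable_trim hm Measure.integrable_toReal_rnDeriv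
  rw [integral_eq_of_trim_eq hm (trim_withDensity_rnDeriv_trim hm hQP).symm
    stronglyMeasurable_condExp]
  exact integral_condExp_withDensity hm (Measure.measurable_rnDeriv _ _)
    (ae_of_ae_trim hm (Measure.rnDeriv_lt_top _ _)) (.of_bound hf C hfC) (hg_int.mul_bdd hf hfC)

lemma neg_le_integral_of_abs_le {μ : Measure Ω} [IsProbabilityMeasure μ] {f : Ω → ℝ} {C : ℝ}
    (hC : ∀ ω, |f ω| ≤ C) : -C ≤ ∫ ω, f ω ∂μ := by
  have h := norm_integral_le_of_norm_le_const (μ := μ) (f := f) (ae_of_all _ hC)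
  rw [probReal_univ, mul_one, Real.norm_eq_abs] at h
  exact (abs_le.mp h).1

end MeasureTheory

lemma sInf_le_sInf_of_forall_exists_eq {ι : Type*} {p : ι → Prop} {f g : ι → ℝ}
    (hbdd : BddBelow {r | ∃ i, p i ∧ r = g i}) (h : ∀ i, p i → ∃ j, p j ∧ g j = f i) :
    sInf {r | ∃ i, p i ∧ r = g i} ≤ sInf {r | ∃ i, p i ∧ r = f i} := by
  by_cases hne : ∃ i, p i
  · obtain ⟨i, hi⟩ := hne
    refine csInf_le_csInf hbdd ⟨f i, i, hi, rfl⟩ ?_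
    rintro _ ⟨i, hi, rfl⟩
    obtain ⟨j, hj, hji⟩ := h i hi
    exact ⟨j, hj, hji.symm⟩
  · simp only [not_exists] at hne
    simp only [hne, false_and, exists_false, Set.ofPred_false, le_refl]

theorem worstCase_condexp_ge_general
    {Ω : Type*} {m0 : MeasurableSpace Ω}
    (D : ∀ m : MeasurableSpace Ω, @Measure Ω m → @Measure Ω m → ℝ≥0∞)
    (P : Measure Ω) [IsProbabilityMeasure P]
    (hD3 : ∀ Q : Measure Ω, D m0 Q P ≠ ⊤ → Q ≪ P)
    (hD4 : ∀ (m : MeasurableSpace Ω) (hm : m ≤ m0) (Q : @Measure Ω m0),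
      D m (Q.trim hm) (P.trim hm) ≤ D m0 Q P)
    (hD5 : ∀ (m : MeasurableSpace Ω) (hm : m ≤ m0) (Q : @Measure Ω m0), Q ≪ P →
      ((fun ω => (Q.trim hm).rnDeriv (P.trim hm) ω) =ᵐ[P] fun ω => Q.rnDeriv P ω) →
      D m (Q.trim hm) (P.trim hm) = D m0 Q P)
    (η : ℝ≥0∞) (hη' : η ≠ ⊤)
    (π : Ω → ℝ) (hπm : Measurable π) (hπb : ∃ C, ∀ ω, |π ω| ≤ C)
    {m : MeasurableSpace Ω} (hm : m ≤ m0) :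
    sInf {r : ℝ | ∃ Q : @Measure Ω m0, IsProbabilityMeasure Q ∧ D m0 Q P ≤ η ∧
        r = ∫ ω, (P[π|m]) ω ∂Q}
      ≥ sInf {r : ℝ | ∃ Q : @Measure Ω m0, IsProbabilityMeasure Q ∧ D m0 Q P ≤ η ∧
        r = ∫ ω, π ω ∂Q} := by
  obtain ⟨C, hC⟩ := hπb
  simp only [← and_assoc]
  refine sInf_le_sInf_of_forall_exists_eq ⟨-C, ?_⟩ fun Q ⟨hQ, hQη⟩ => ?_
  · rintro _ ⟨Q, ⟨hQ, -⟩, rfl⟩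
    exact neg_le_integral_of_abs_le hC
  have hQP : Q ≪ P := hD3 Q (ne_top_of_le_ne_top hη' hQη)
  set Q' := P.withDensity ((Q.trim hm).rnDeriv (P.trim hm))
  have htrim : Q'.trim hm = Q.trim hm := trim_withDensity_rnDeriv_trim hm hQP
  have hQ'P : Q'.rnDeriv P =ᵐ[P] (Q.trim hm).rnDeriv (P.trim hm) :=
    Measure.rnDeriv_withDensity P ((Measure.measurable_rnDeriv _ _).mono hm le_rfl)
  refine ⟨Q', ⟨isProbabilityMeasure_of_trim_eq hm htrim, ?_⟩, ?_⟩
  · calc D m0 Q' P = D m (Q'.trim hm) (P.trim hm) :=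
          (hD5 m hm Q' (withDensity_absolutelyContinuous _ _) (htrim ▸ hQ'P.symm)).symm
      _ = D m (Q.trim hm) (P.trim hm) := by rw [htrim]
      _ ≤ D m0 Q P := hD4 m hm Q
      _ ≤ η := hQη
  · exact (integral_condExp_eq_integral_withDensity_rnDeriv_trim hm hQP hπm.aestronglyMeasurable
      (ae_of_all _ hC)).symm

/-- Monotonicity of the worst-case expectation with respect to
conditional-expectation contractions (Proposition 3): for a divergence `D`
satisfying D3 (finiteness implies absolute continuity), D4 (monotonicity under
restriction) and D5 (equality under density-preserving restriction), the worst
case of the conditional expectation `E_P[π|m]` over the divergence ball is at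
least the worst case of `π` itself. -/
theorem worstCase_condexp_ge
    {Ω : Type*} {m0 : MeasurableSpace Ω}
    (D : ∀ m : MeasurableSpace Ω, @Measure Ω m → @Measure Ω m → ℝ≥0∞)
    (P : Measure Ω) [IsProbabilityMeasure P]
    (hD3 : ∀ Q : Measure Ω, D m0 Q P ≠ ⊤ → Q ≪ P)
    (hD4 : ∀ (m : MeasurableSpace Ω) (hm : m ≤ m0) (Q : @Measure Ω m0),
      D m (Q.trim hm) (P.trim hm) ≤ D m0 Q P)
    (hD5 : ∀ (m : MeasurableSpace Ω) (hm : m ≤ m0) (Q : @Measure Ω m0), Q ≪ P →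
      ((fun ω => (Q.trim hm).rnDeriv (P.trim hm) ω) =ᵐ[P] fun ω => Q.rnDeriv P ω) →
      D m (Q.trim hm) (P.trim hm) = D m0 Q P)
    (η : ℝ≥0∞) (hη : 0 < η) (hη' : η ≠ ⊤)
    (π : Ω → ℝ) (hπm : Measurable π) (hπb : ∃ C, ∀ ω, |π ω| ≤ C)
    {m : MeasurableSpace Ω} (hm : m ≤ m0) :
    sInf {r : ℝ | ∃ Q : @Measure Ω m0, IsProbabilityMeasure Q ∧ D m0 Q P ≤ η ∧
        r = ∫ ω, (P[π|m]) ω ∂Q}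
      ≥ sInf {r : ℝ | ∃ Q : @Measure Ω m0, IsProbabilityMeasure Q ∧ D m0 Q P ≤ η ∧
        r = ∫ ω, π ω ∂Q} :=
  worstCase_condexp_ge_general D P hD3 hD4 hD5 η hη' π hπm hπb hm
end

section
/- Let $D$ be a divergence satisfying D2–D5, $P$ a probability measure on $(\Theta,\mathcal{B})$, $E$ a Borel set with $0<P(E)<1$, and set $p^{\min} := \inf\{Q(E) : D(Q\|P)\le\eta\}$. Then the measure $Q^*$ with density $dQ^*/dP = (p^{\min}/p)\mathbf{1}_E + ((1-p^{\min})/(1-p))\mathbf{1}_{\Theta\setminus E}$, where $p=P(E)$, satisfies $D(Q^*\|P)\le\eta$ and $Q^*(E)=p^{\min}$; i.e., the infimum is attained by a two-valued-density belief. -/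
/-!
Restricting to the σ-algebra generated by `E`, D4 and D5 show that replacing any `Q` in the
divergence ball by the two-valued measure `Q_q`, `q = Q(E)`, keeps it in the ball. Hence `pmin` is
also the infimum of `T = {q ∈ [0, p] | D(Q_q‖P) ≤ η}`. Since `Q_q` is the mixture
`(1 - q/p) Q₀ + (q/p) P`, D2 makes `q ↦ D(Q_q‖P)` continuous on `[0, p]`, so `T` is closed and
contains its infimum.
-/

open MeasureTheory Set
open scoped ENNReal Classical

theorem csInf_mem_of_isClosed_of_forall_le_mem {α : Type*} [ConditionallyCompleteLinearOrder α]
    [TopologicalSpace α] [OrderTopology α] {S T : Set α} {a : α} (hT : IsClosed T)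
    (hTS : T ⊆ S) (hS : BddBelow S) (ha : a ∈ T) (hST : ∀ r ∈ S, r ≤ a → r ∈ T) :
    sInf S ∈ T := by
  have hTbdd : BddBelow T := hS.mono hTS
  have hinf : sInf S = sInf T := by
    refine le_antisymm (csInf_le_csInf hS ⟨a, ha⟩ hTS) (le_csInf ⟨a, hTS ha⟩ fun r hr => ?_)
    rcases le_total r a with hra | har
    · exact csInf_le hTbdd (hST r hr hra)
    · exact (csInf_le hTbdd ha).trans har
  exact hinf ▸ hT.csInf_mem ⟨a, ha⟩ hTbdd

noncomputable section TwoValued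

variable {Ω : Type*} {m0 : MeasurableSpace Ω}

theorem MeasureTheory.Measure.trim_generateFrom_singleton_eq {μ ν : Measure Ω}
    [IsFiniteMeasure μ] {E : Set Ω}
    (hm : MeasurableSpace.generateFrom {E} ≤ m0) (hE : μ E = ν E) (huniv : μ univ = ν univ) :
    μ.trim hm = ν.trim hm := by
  have hEm : MeasurableSet[MeasurableSpace.generateFrom {E}] E :=
    MeasurableSpace.measurableSet_generateFrom rfl
  refine ext_of_generate_finite {E} rfl (IsPiSystem.singleton E) ?_ ?_
  · rintro s rfl
    rw [trim_measurableSet_eq hm hEm, trim_measurableSet_eq hm hEm, hE]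
  · rw [trim_measurableSet_eq hm MeasurableSet.univ, trim_measurableSet_eq hm MeasurableSet.univ,
      huniv]

theorem MeasureTheory.Measure.rnDeriv_trim_withDensity_ae_eq {m : MeasurableSpace Ω}
    {μ : Measure[m0] Ω} (hm : m ≤ m0) [SigmaFinite (μ.trim hm)] {f : Ω → ℝ≥0∞}
    (hf : Measurable[m] f) :
    (fun ω => ((μ.withDensity f).trim hm).rnDeriv (μ.trim hm) ω) =ᵐ[μ]
      fun ω => (μ.withDensity f).rnDeriv μ ω := by
  have : SigmaFinite μ := SigmaFinite.of_trim hm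
  have htrim : ((μ.withDensity f).trim hm).rnDeriv (μ.trim hm) =ᵐ[μ.trim hm] f := by
    rw [trim_withDensity hm hf]
    exact Measure.rnDeriv_withDensity _ hf
  exact (ae_eq_of_ae_eq_trim htrim).trans (Measure.rnDeriv_withDensity μ (hf.mono hm le_rfl)).symm

def twoValuedDensity (P : Measure Ω) (E : Set Ω) (q : ℝ) : Ω → ℝ≥0∞ := fun ω =>
  if ω ∈ E then ENNReal.ofReal (q / (P E).toReal)
  else ENNReal.ofReal ((1 - q) / (1 - (P E).toReal))

def twoValuedMeasure (P : Measure Ω) (E : Set Ω) (q : ℝ) : Measure Ω :=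
  P.withDensity (twoValuedDensity P E q)

variable {P : Measure Ω} {E : Set Ω} {q : ℝ}

theorem twoValuedDensity_of_mem {ω : Ω} (h : ω ∈ E) :
    twoValuedDensity P E q ω = ENNReal.ofReal (q / (P E).toReal) :=
  if_pos h

theorem twoValuedDensity_of_notMem {ω : Ω} (h : ω ∉ E) :
    twoValuedDensity P E q ω = ENNReal.ofReal ((1 - q) / (1 - (P E).toReal)) :=
  if_neg h

theorem measurable_twoValuedDensity {m : MeasurableSpace Ω} (hE : MeasurableSet[m] E) :
    Measurable[m] (twoValuedDensity P E q) :=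
  Measurable.ite hE measurable_const measurable_const

theorem twoValuedMeasure_apply_self [IsFiniteMeasure P] (hE : MeasurableSet E) (hE0 : 0 < P E)
    (hq : 0 ≤ q) : twoValuedMeasure P E q E = ENNReal.ofReal q := by
  have hp : 0 < (P E).toReal := ENNReal.toReal_pos hE0.ne' (measure_ne_top P E)
  rw [twoValuedMeasure, withDensity_apply _ hE,
    setLIntegral_congr_fun hE (fun _ hω => twoValuedDensity_of_mem hω), setLIntegral_const]
  nth_rw 2 [← ENNReal.ofReal_toReal (measure_ne_top P E)]
  rw [← ENNReal.ofReal_mul (by positivity), div_mul_cancel₀ _ hp.ne']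

theorem twoValuedMeasure_apply_compl [IsProbabilityMeasure P] (hE : MeasurableSet E)
    (hE1 : P E < 1) (hq : q ≤ 1) : twoValuedMeasure P E q Eᶜ = ENNReal.ofReal (1 - q) := by
  have hp : (P E).toReal < 1 := ENNReal.toReal_lt_of_lt_ofReal (by simpa using hE1)
  have hPEc : P Eᶜ = ENNReal.ofReal (1 - (P E).toReal) := by
    rw [prob_compl_eq_one_sub hE, ENNReal.ofReal_sub _ ENNReal.toReal_nonneg, ENNReal.ofReal_one,
      ENNReal.ofReal_toReal (measure_ne_top P E)]
  rw [twoValuedMeasure, withDensity_apply _ hE.compl,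
    setLIntegral_congr_fun hE.compl (fun _ hω => twoValuedDensity_of_notMem hω),
    setLIntegral_const, hPEc,
    ← ENNReal.ofReal_mul (div_nonneg (by linarith) (by linarith)),
    div_mul_cancel₀ _ (by linarith : 1 - (P E).toReal ≠ 0)]

theorem isProbabilityMeasure_twoValuedMeasure [IsProbabilityMeasure P] (hE : MeasurableSet E)
    (hE0 : 0 < P E) (hE1 : P E < 1) (hq0 : 0 ≤ q) (hq1 : q ≤ 1) :
    IsProbabilityMeasure (twoValuedMeasure P E q) := by
  constructor
  rw [← union_compl_self E, measure_union disjoint_compl_right hE.compl,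
    twoValuedMeasure_apply_self hE hE0 hq0, twoValuedMeasure_apply_compl hE hE1 hq1,
    ← ENNReal.ofReal_add hq0 (by linarith), add_sub_cancel, ENNReal.ofReal_one]

/-- The mixtures of `Q₀` and `P` sweep out the two-valued family, which is how D2 yields
continuity in `q`. -/
theorem smul_twoValuedMeasure_zero_add_smul [IsProbabilityMeasure P] (hE : MeasurableSet E)
    (hE0 : 0 < P E) (hE1 : P E < 1) {ε : ℝ} (hε0 : 0 ≤ ε) (hε1 : ε ≤ 1) :
    ENNReal.ofReal ε • twoValuedMeasure P E 0 + ENNReal.ofReal (1 - ε) • P =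
      twoValuedMeasure P E ((1 - ε) * (P E).toReal) := by
  have hp0 : 0 < (P E).toReal := ENNReal.toReal_pos hE0.ne' (measure_ne_top P E)
  have hp1 : 0 < 1 - (P E).toReal :=
    sub_pos.2 (ENNReal.toReal_lt_of_lt_ofReal (by simpa using hE1))
  conv_lhs => rw [twoValuedMeasure, ← withDensity_smul _ (measurable_twoValuedDensity hE),
    ← withDensity_const, ← withDensity_add_left ((measurable_twoValuedDensity hE).const_smul _)]
  congr 1
  funext ω
  simp only [Pi.add_apply, Pi.smul_apply, smul_eq_mul]
  by_cases hω : ω ∈ E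
  · rw [twoValuedDensity_of_mem hω, twoValuedDensity_of_mem hω]
    field_simp
    simp
  · rw [twoValuedDensity_of_notMem hω, twoValuedDensity_of_notMem hω,
      ← ENNReal.ofReal_mul hε0, ← ENNReal.ofReal_add (by positivity) (by linarith)]
    congr 1
    field_simp
    ring

end TwoValued

section Divergence

variable {Ω : Type*} {m0 : MeasurableSpace Ω}
  (D : ∀ m : MeasurableSpace Ω, @Measure Ω m → @Measure Ω m → ℝ≥0∞)
  {P : Measure Ω} [IsProbabilityMeasure P] {E : Set Ω}

theorem divergence_twoValuedMeasure_le
    (hD4 : ∀ (m : MeasurableSpace Ω) (hm : m ≤ m0) (Q : @Measure Ω m0),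
      D m (Q.trim hm) (P.trim hm) ≤ D m0 Q P)
    (hD5 : ∀ (m : MeasurableSpace Ω) (hm : m ≤ m0) (Q : @Measure Ω m0), Q ≪ P →
      ((fun ω => (Q.trim hm).rnDeriv (P.trim hm) ω) =ᵐ[P] fun ω => Q.rnDeriv P ω) →
      D m (Q.trim hm) (P.trim hm) = D m0 Q P)
    (hE : MeasurableSet E) (hE0 : 0 < P E) (hE1 : P E < 1)
    (Q : Measure Ω) [IsProbabilityMeasure Q] :
    D m0 (twoValuedMeasure P E (Q E).toReal) P ≤ D m0 Q P := by
  have hm : MeasurableSpace.generateFrom {E} ≤ m0 :=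
    MeasurableSpace.generateFrom_le (by simpa using hE)
  have hq0 : 0 ≤ (Q E).toReal := ENNReal.toReal_nonneg
  have hq1 : (Q E).toReal ≤ 1 :=
    ENNReal.toReal_le_of_le_ofReal zero_le_one (by simpa using prob_le_one)
  have := isProbabilityMeasure_twoValuedMeasure hE hE0 hE1 hq0 hq1
  have hEm : MeasurableSet[MeasurableSpace.generateFrom {E}] E :=
    MeasurableSpace.measurableSet_generateFrom rfl
  calc D m0 (twoValuedMeasure P E (Q E).toReal) P
      = D _ ((twoValuedMeasure P E (Q E).toReal).trim hm) (P.trim hm) :=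
        (hD5 _ hm _ (withDensity_absolutelyContinuous _ _)
          (Measure.rnDeriv_trim_withDensity_ae_eq hm (measurable_twoValuedDensity hEm))).symm
    _ = D _ (Q.trim hm) (P.trim hm) := by
        congr 1
        refine Measure.trim_generateFrom_singleton_eq hm ?_ (by simp only [measure_univ])
        rw [twoValuedMeasure_apply_self hE hE0 hq0, ENNReal.ofReal_toReal (measure_ne_top Q E)]
    _ ≤ D m0 Q P := hD4 _ hm Q

theorem continuousOn_divergence_twoValuedMeasure
    (hD2 : ∀ Q : @Measure Ω m0, IsProbabilityMeasure Q → Q ≪ P →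
      (∃ C : ℝ≥0∞, C ≠ ⊤ ∧ ∀ᵐ ω ∂P, Q.rnDeriv P ω ≤ C) →
      ContinuousOn (fun ε : ℝ =>
        D m0 (ENNReal.ofReal ε • Q + ENNReal.ofReal (1 - ε) • P) P) (Set.Icc 0 1))
    (hE : MeasurableSet E) (hE0 : 0 < P E) (hE1 : P E < 1) :
    ContinuousOn (fun q => D m0 (twoValuedMeasure P E q) P) (Icc 0 (P E).toReal) := by
  have hp0 : 0 < (P E).toReal := ENNReal.toReal_pos hE0.ne' (measure_ne_top P E)
  have hbdd : ∀ᵐ ω ∂P,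
      (twoValuedMeasure P E 0).rnDeriv P ω ≤ ENNReal.ofReal (1 / (1 - (P E).toReal)) := by
    filter_upwards [Measure.rnDeriv_withDensity P (measurable_twoValuedDensity (q := 0) hE)]
      with ω hω
    rw [twoValuedMeasure, hω]
    by_cases h : ω ∈ E
    · simp [twoValuedDensity_of_mem h]
    · simp [twoValuedDensity_of_notMem h]
  have hmix := hD2 _ (isProbabilityMeasure_twoValuedMeasure hE hE0 hE1 le_rfl zero_le_one)
    (withDensity_absolutelyContinuous _ _) ⟨_, ENNReal.ofReal_ne_top, hbdd⟩
  have hmaps : MapsTo (fun q : ℝ => 1 - q / (P E).toReal) (Icc 0 (P E).toReal) (Icc 0 1) := by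
    rintro q ⟨hq0, hqp⟩
    have := div_le_one_of_le₀ hqp hp0.le
    have := div_nonneg hq0 hp0.le
    constructor <;> linarith
  refine (hmix.comp (by fun_prop) hmaps).congr fun q hq => ?_
  obtain ⟨hε0, hε1⟩ := hmaps hq
  simp only [Function.comp_apply]
  rw [smul_twoValuedMeasure_zero_add_smul hE hE0 hE1 hε0 hε1, sub_sub_cancel,
    div_mul_cancel₀ _ hp0.ne']

end Divergence

theorem min_prob_attained_by_two_valued_density_general
    {Ω : Type*} {m0 : MeasurableSpace Ω}
    (D : ∀ m : MeasurableSpace Ω, @Measure Ω m → @Measure Ω m → ℝ≥0∞)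
    (P : Measure Ω) [IsProbabilityMeasure P]
    (hD1 : D m0 P P = 0)
    (hD2 : ∀ Q : @Measure Ω m0, IsProbabilityMeasure Q → Q ≪ P →
      (∃ C : ℝ≥0∞, C ≠ ⊤ ∧ ∀ᵐ ω ∂P, Q.rnDeriv P ω ≤ C) →
      ContinuousOn (fun ε : ℝ =>
        D m0 (ENNReal.ofReal ε • Q + ENNReal.ofReal (1 - ε) • P) P) (Set.Icc 0 1))
    (hD4 : ∀ (m : MeasurableSpace Ω) (hm : m ≤ m0) (Q : @Measure Ω m0),
      D m (Q.trim hm) (P.trim hm) ≤ D m0 Q P)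
    (hD5 : ∀ (m : MeasurableSpace Ω) (hm : m ≤ m0) (Q : @Measure Ω m0), Q ≪ P →
      ((fun ω => (Q.trim hm).rnDeriv (P.trim hm) ω) =ᵐ[P] fun ω => Q.rnDeriv P ω) →
      D m (Q.trim hm) (P.trim hm) = D m0 Q P)
    (η : ℝ≥0∞)
    (E : Set Ω) (hE : MeasurableSet E) (hE0 : 0 < P E) (hE1 : P E < 1)
    (p pmin : ℝ) (hp : p = (P E).toReal)
    (hpmin : pmin = sInf {r : ℝ | ∃ Q : @Measure Ω m0, IsProbabilityMeasure Q ∧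
        D m0 Q P ≤ η ∧ r = (Q E).toReal})
    (Qstar : Measure Ω)
    (hQstar : Qstar = P.withDensity (fun ω =>
      if ω ∈ E then ENNReal.ofReal (pmin / p) else ENNReal.ofReal ((1 - pmin) / (1 - p)))) :
    D m0 Qstar P ≤ η ∧ (Qstar E).toReal = pmin := by
  subst hp hpmin hQstar
  set S :=
    {r : ℝ | ∃ Q : @Measure Ω m0, IsProbabilityMeasure Q ∧ D m0 Q P ≤ η ∧ r = (Q E).toReal}
  change D m0 (twoValuedMeasure P E (sInf S)) P ≤ η ∧
    (twoValuedMeasure P E (sInf S) E).toReal = sInf S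
  set T := Icc 0 (P E).toReal ∩ (fun q => D m0 (twoValuedMeasure P E q) P) ⁻¹' Iic η
  have hT : IsClosed T := (continuousOn_divergence_twoValuedMeasure D hD2 hE hE0 hE1)
    |>.preimage_isClosed_of_isClosed isClosed_Icc isClosed_Iic
  have hp1 : (P E).toReal ≤ 1 :=
    ENNReal.toReal_le_of_le_ofReal zero_le_one (by simpa using hE1.le)
  have hTS : T ⊆ S := fun q ⟨⟨hq0, hqp⟩, hq⟩ =>
    ⟨twoValuedMeasure P E q, isProbabilityMeasure_twoValuedMeasure hE hE0 hE1 hq0 (hqp.trans hp1),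
      hq, by rw [twoValuedMeasure_apply_self hE hE0 hq0, ENNReal.toReal_ofReal hq0]⟩
  have hST : ∀ r ∈ S, r ≤ (P E).toReal → r ∈ T := by
    rintro r ⟨Q, hQ, hQη, rfl⟩ hr
    exact ⟨⟨ENNReal.toReal_nonneg, hr⟩,
      (divergence_twoValuedMeasure_le D hD4 hD5 hE hE0 hE1 Q).trans hQη⟩
  have hpT : (P E).toReal ∈ T := hST _ ⟨P, inferInstance, hD1.le.trans zero_le, rfl⟩ le_rfl
  have hS : BddBelow S := ⟨0, by rintro _ ⟨Q, -, -, rfl⟩; exact ENNReal.toReal_nonneg⟩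
  obtain ⟨⟨hpmin0, -⟩, hpminη⟩ := csInf_mem_of_isClosed_of_forall_le_mem hT hTS hS hpT hST
  refine ⟨hpminη, ?_⟩
  rw [twoValuedMeasure_apply_self hE hE0 hpmin0, ENNReal.toReal_ofReal hpmin0]

/-- The minimum probability of an event over a divergence ball is attained by a
belief with two-valued density (Lemma 5 of the paper): for a divergence `D`
satisfying D1–D5 and an event `E` with `0 < P(E) < 1`, the measure `Q*` with
density `(pmin/p)·1_E + ((1-pmin)/(1-p))·1_{Eᶜ}` lies in the ball and attains
`pmin = inf {Q(E) : D(Q‖P) ≤ η}`. -/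
theorem min_prob_attained_by_two_valued_density
    {Ω : Type*} {m0 : MeasurableSpace Ω}
    (D : ∀ m : MeasurableSpace Ω, @Measure Ω m → @Measure Ω m → ℝ≥0∞)
    (P : Measure Ω) [IsProbabilityMeasure P]
    (hD1 : D m0 P P = 0)
    (hD2 : ∀ Q : @Measure Ω m0, IsProbabilityMeasure Q → Q ≪ P →
      (∃ C : ℝ≥0∞, C ≠ ⊤ ∧ ∀ᵐ ω ∂P, Q.rnDeriv P ω ≤ C) →
      ContinuousOn (fun ε : ℝ =>
        D m0 (ENNReal.ofReal ε • Q + ENNReal.ofReal (1 - ε) • P) P) (Set.Icc 0 1))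
    (hD3 : ∀ Q : Measure Ω, D m0 Q P ≠ ⊤ → Q ≪ P)
    (hD4 : ∀ (m : MeasurableSpace Ω) (hm : m ≤ m0) (Q : @Measure Ω m0),
      D m (Q.trim hm) (P.trim hm) ≤ D m0 Q P)
    (hD5 : ∀ (m : MeasurableSpace Ω) (hm : m ≤ m0) (Q : @Measure Ω m0), Q ≪ P →
      ((fun ω => (Q.trim hm).rnDeriv (P.trim hm) ω) =ᵐ[P] fun ω => Q.rnDeriv P ω) →
      D m (Q.trim hm) (P.trim hm) = D m0 Q P)
    (η : ℝ≥0∞) (hη : 0 < η) (hη' : η ≠ ⊤)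
    (E : Set Ω) (hE : MeasurableSet E) (hE0 : 0 < P E) (hE1 : P E < 1)
    (p pmin : ℝ) (hp : p = (P E).toReal)
    (hpmin : pmin = sInf {r : ℝ | ∃ Q : @Measure Ω m0, IsProbabilityMeasure Q ∧
        D m0 Q P ≤ η ∧ r = (Q E).toReal})
    (Qstar : Measure Ω)
    (hQstar : Qstar = P.withDensity (fun ω =>
      if ω ∈ E then ENNReal.ofReal (pmin / p) else ENNReal.ofReal ((1 - pmin) / (1 - p)))) :
    D m0 Qstar P ≤ η ∧ (Qstar E).toReal = pmin :=
  min_prob_attained_by_two_valued_density_general D P hD1 hD2 hD4 hD5 η E hE hE0 hE1 p pmin hp hpmin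
    Qstar hQstar
end

section
/- Let $X^{\min}:[\underline\theta,\bar\theta]\to[0,1]$ be non-decreasing, and suppose a function $U:[\underline\theta,\bar\theta]\to\mathbb{R}$ satisfies, for all $\theta,\hat\theta$ with $\theta>\hat\theta$: $U(\theta)\ge U(\hat\theta) + (\theta-\hat\theta)X^{\min}(\hat\theta)$ and $U(\hat\theta)\ge U(\theta) - (\theta-\hat\theta)M$ for some constant $M\ge 0$ (so $U$ is Lipschitz). If $U(\underline\theta)\ge 0$, then $U(\theta)\ge \int_{\underline\theta}^{\theta} X^{\min}(z)\,dz$ for all $\theta$. -/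
open MeasureTheory intervalIntegral

/-!
Along a uniform partition `a = t₀ < ⋯ < tₙ = θ` of mesh `Δ`, incentive compatibility makes the
increment `U θ - U a` dominate the lower Riemann sum `∑ Δ X(tᵢ)`, while monotonicity makes the
integral of `X` at most the upper sum `∑ Δ X(tᵢ₊₁)`. The two sums telescope to a difference of
`Δ (X θ - X a)`, which vanishes as `n → ∞`.
-/

open Set Filter Topology
open Finset (range mem_range sum_le_sum sum_range_sub sum_sub_distrib mul_sum)

theorem MonotoneOn.integral_le_sum_mul_right {X : ℝ → ℝ} {t : ℕ → ℝ} {n : ℕ}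
    (ht : Monotone t) (hX : MonotoneOn X (Icc (t 0) (t n))) :
    ∫ z in t 0..t n, X z ≤ ∑ i ∈ range n, (t (i + 1) - t i) * X (t (i + 1)) := by
  have hsub : ∀ i < n, Icc (t i) (t (i + 1)) ⊆ Icc (t 0) (t n) := fun i hi =>
    Icc_subset_Icc (ht i.zero_le) (ht hi)
  have hint : ∀ i < n, IntervalIntegrable X volume (t i) (t (i + 1)) := fun i hi =>
    (hX.mono (uIcc_of_le (ht i.le_succ) ▸ hsub i hi)).intervalIntegrable
  rw [← sum_integral_adjacent_intervals hint]
  refine sum_le_sum fun i hi => ?_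
  replace hi := mem_range.mp hi
  calc ∫ z in t i..t (i + 1), X z ≤ ∫ _ in t i..t (i + 1), X (t (i + 1)) :=
        integral_mono_on (ht i.le_succ) (hint i hi) intervalIntegrable_const fun z hz =>
          hX (hsub i hi hz) (hsub i hi (right_mem_Icc.2 (ht i.le_succ))) hz.2
    _ = (t (i + 1) - t i) * X (t (i + 1)) := by rw [intervalIntegral.integral_const, smul_eq_mul]

section SlopeBound

variable {a b : ℝ} {X U : ℝ → ℝ}

theorem integral_le_sub_add_div_of_le_slope (hab : a ≤ b) (hX : MonotoneOn X (Icc a b))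
    (hU : ∀ x ∈ Icc a b, ∀ y ∈ Icc a b, x ≤ y → (y - x) * X x ≤ U y - U x)
    {n : ℕ} (hn : n ≠ 0) :
    ∫ z in a..b, X z ≤ U b - U a + (b - a) * (X b - X a) / n := by
  set Δ := (b - a) / n with hΔ
  set t : ℕ → ℝ := fun i => a + i * Δ
  have ht : Monotone t := fun i j hij => by
    have : 0 ≤ Δ := div_nonneg (sub_nonneg.2 hab) n.cast_nonneg
    simp only [t]
    gcongr
  have ht0 : t 0 = a := by simp [t]
  have htn : t n = b := by
    simp only [t, Δ]
    field_simp
    ring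
  have hstep : ∀ i, t (i + 1) - t i = Δ := fun i => by
    simp only [t]
    push_cast
    ring
  have hmem : ∀ i ≤ n, t i ∈ Icc a b := fun i hi => ⟨ht0 ▸ ht i.zero_le, htn ▸ ht hi⟩
  have upper := MonotoneOn.integral_le_sum_mul_right (X := X) (n := n) ht (by rwa [ht0, htn])
  simp only [ht0, htn, hstep] at upper
  have lower : ∑ i ∈ range n, Δ * X (t i) ≤ U b - U a := by
    rw [← ht0, ← htn, ← sum_range_sub (fun i => U (t i))]
    refine sum_le_sum fun i hi => ?_
    replace hi := mem_range.mp hi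
    rw [← hstep i]
    exact hU _ (hmem i hi.le) _ (hmem (i + 1) hi) (ht i.le_succ)
  have telescope : ∑ i ∈ range n, Δ * X (t (i + 1)) - ∑ i ∈ range n, Δ * X (t i)
      = (b - a) * (X b - X a) / n := by
    rw [← sum_sub_distrib, mul_div_right_comm, ← hΔ, ← ht0, ← htn,
      ← sum_range_sub (fun i => X (t i)), mul_sum]
    simp only [mul_sub]
  linarith

theorem integral_le_sub_of_le_slope (hab : a ≤ b) (hX : MonotoneOn X (Icc a b))
    (hU : ∀ x ∈ Icc a b, ∀ y ∈ Icc a b, x ≤ y → (y - x) * X x ≤ U y - U x) :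
    ∫ z in a..b, X z ≤ U b - U a := by
  have hlim : Tendsto (fun n : ℕ => U b - U a + (b - a) * (X b - X a) / n) atTop
      (𝓝 (U b - U a)) := by
    simpa using tendsto_const_nhds.add
      (tendsto_const_div_atTop_nhds_zero_nat ((b - a) * (X b - X a)))
  exact ge_of_tendsto hlim <| (eventually_ne_atTop 0).mono fun n hn =>
    integral_le_sub_add_div_of_le_slope hab hX hU hn

end SlopeBound

theorem envelope_lower_bound_general
    (a b : ℝ) (X U : ℝ → ℝ)
    (hXmono : MonotoneOn X (Set.Icc a b))
    (hIC : ∀ θ ∈ Set.Icc a b, ∀ θ' ∈ Set.Icc a b, θ' < θ →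
      U θ ≥ U θ' + (θ - θ') * X θ')
    (hU0 : 0 ≤ U a) :
    ∀ θ ∈ Set.Icc a b, U θ ≥ ∫ z in a..θ, X z := by
  intro θ hθ
  have hsub : Icc a θ ⊆ Icc a b := Icc_subset_Icc_right hθ.2
  have hslope : ∀ x ∈ Icc a θ, ∀ y ∈ Icc a θ, x ≤ y → (y - x) * X x ≤ U y - U x := by
    intro x hx y hy hxy
    rcases hxy.eq_or_lt with rfl | hlt
    · simp
    · linarith [hIC y (hsub hy) x (hsub hx) hlt]
  linarith [integral_le_sub_of_le_slope hθ.1 (hXmono.mono hsub) hslope]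

/-- Envelope lower bound (Proposition 2(i)): if `U` satisfies the incentive
inequalities `U θ ≥ U θ' + (θ-θ')·X θ'` and the Lipschitz-type inequality
`U θ' ≥ U θ - (θ-θ')·M` for `θ' < θ`, with `X` non-decreasing and `[0,1]`-valued
and `U a ≥ 0`, then `U θ ≥ ∫_a^θ X(z) dz`. -/
theorem envelope_lower_bound
    (a b : ℝ) (hab : a ≤ b) (X U : ℝ → ℝ) (M : ℝ) (hM : 0 ≤ M)
    (hXmono : MonotoneOn X (Set.Icc a b))
    (hX01 : ∀ z ∈ Set.Icc a b, X z ∈ Set.Icc (0 : ℝ) 1)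
    (hIC : ∀ θ ∈ Set.Icc a b, ∀ θ' ∈ Set.Icc a b, θ' < θ →
      U θ ≥ U θ' + (θ - θ') * X θ')
    (hLip : ∀ θ ∈ Set.Icc a b, ∀ θ' ∈ Set.Icc a b, θ' < θ →
      U θ' ≥ U θ - (θ - θ') * M)
    (hU0 : 0 ≤ U a) :
    ∀ θ ∈ Set.Icc a b, U θ ≥ ∫ z in a..θ, X z :=
  envelope_lower_bound_general a b X U hXmono hIC hU0
end

section
/- Fix constants $0\le X^{\min} < X \le 1$ (with $X<1$ unless stated), $U_0\ge 0$, and $K\ge 0$. Consider minimizing $wX + l(1-X)$ over $(w,l)\in\mathbb{R}^2$ subject to (i) $w\ge l$, (ii) $wX^{\min} + l(1-X^{\min}) = U_0$, (iii) $l\le K$. If $U_0\le K$, the unique minimizer is $(w^*,l^*)=(U_0,U_0)$ (full insurance). If $U_0>K$ and $X^{\min}>0$, the unique minimizer is $l^*=K$, $w^* = (U_0 - K(1-X^{\min}))/X^{\min}$. -/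
/-!
On the constraint line `w * Xmin + l * (1 - Xmin) = U0` the objective equals
`U0 + (w - l) * (X - Xmin)`. Since `Xmin < X`, minimizing the objective over the line amounts to
minimizing the spread `w - l`, and a point of the line is determined by its spread. With `w ≥ l`
alone the spread is minimized (at `0`) by full insurance; when `U0 > K` the relation
`(w - l) * Xmin = U0 - l` makes the spread decreasing in `l`, so the cap `l ≤ K` binds.
-/

section ConstraintLine

variable {a x U w l w' l' : ℝ}

theorem sub_mul_eq_of_constraint (h : w * a + l * (1 - a) = U) : (w - l) * a = U - l := by
  linear_combination h

theorem objective_sub_objective_of_constraint (hp : w * a + l * (1 - a) = U)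
    (hq : w' * a + l' * (1 - a) = U) :
    (w * x + l * (1 - x)) - (w' * x + l' * (1 - x)) = ((w - l) - (w' - l')) * (x - a) := by
  linear_combination hp - hq

theorem eq_of_constraint_of_sub_eq (hp : w * a + l * (1 - a) = U)
    (hq : w' * a + l' * (1 - a) = U) (h : w - l = w' - l') : w = w' ∧ l = l' := by
  have hl : l = l' := by linear_combination hp - hq - a * h
  exact ⟨by linarith, hl⟩

theorem objective_le_and_eq_of_constraint_of_sub_le (hx : a < x)
    (hp : w * a + l * (1 - a) = U) (hq : w' * a + l' * (1 - a) = U) (hle : w' - l' ≤ w - l) :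
    w' * x + l' * (1 - x) ≤ w * x + l * (1 - x) ∧
      (w * x + l * (1 - x) = w' * x + l' * (1 - x) → w = w' ∧ l = l') := by
  have hdiff := objective_sub_objective_of_constraint (x := x) hp hq
  refine ⟨?_, fun heq => eq_of_constraint_of_sub_eq hp hq ?_⟩
  · nlinarith [mul_nonneg (sub_nonneg.2 hle) (sub_nonneg.2 hx.le)]
  · have hzero : ((w - l) - (w' - l')) * (x - a) = 0 := by rw [← hdiff, heq, sub_self]
    linarith [(mul_eq_zero.1 hzero).resolve_right (sub_ne_zero.2 hx.ne')]

end ConstraintLine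

theorem reduced_problem_limited_premium_general
    (Xmin X U0 K : ℝ)
    (h1 : Xmin < X) :
    (U0 ≤ K →
      ((U0 ≥ U0 ∧ U0 * Xmin + U0 * (1 - Xmin) = U0 ∧ U0 ≤ K) ∧
        ∀ w l : ℝ, w ≥ l → w * Xmin + l * (1 - Xmin) = U0 → l ≤ K →
          (U0 * X + U0 * (1 - X) ≤ w * X + l * (1 - X) ∧
            (w * X + l * (1 - X) = U0 * X + U0 * (1 - X) → w = U0 ∧ l = U0)))) ∧
    (K < U0 → 0 < Xmin →
      (((U0 - K * (1 - Xmin)) / Xmin ≥ K ∧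
          ((U0 - K * (1 - Xmin)) / Xmin) * Xmin + K * (1 - Xmin) = U0 ∧ K ≤ K) ∧
        ∀ w l : ℝ, w ≥ l → w * Xmin + l * (1 - Xmin) = U0 → l ≤ K →
          (((U0 - K * (1 - Xmin)) / Xmin) * X + K * (1 - X) ≤ w * X + l * (1 - X) ∧
            (w * X + l * (1 - X) = ((U0 - K * (1 - Xmin)) / Xmin) * X + K * (1 - X) →
              w = (U0 - K * (1 - Xmin)) / Xmin ∧ l = K)))) := by
  constructor
  · intro hUK
    have hfull : U0 * Xmin + U0 * (1 - Xmin) = U0 := by ring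
    refine ⟨⟨le_rfl, hfull, hUK⟩, fun w l hwl hc _ => ?_⟩
    exact objective_le_and_eq_of_constraint_of_sub_le h1 hc hfull (by linarith)
  · intro hKU hXmin
    set wStar := (U0 - K * (1 - Xmin)) / Xmin
    have hcStar : wStar * Xmin + K * (1 - Xmin) = U0 := by
      rw [div_mul_cancel₀ _ hXmin.ne']; ring
    have hspread : (wStar - K) * Xmin = U0 - K := sub_mul_eq_of_constraint hcStar
    have hwK : wStar ≥ K := by nlinarith
    refine ⟨⟨hwK, hcStar, le_rfl⟩, fun w l _ hc hlK => ?_⟩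
    refine objective_le_and_eq_of_constraint_of_sub_le h1 hc hcStar ?_
    refine le_of_mul_le_mul_right ?_ hXmin
    rw [hspread, sub_mul_eq_of_constraint hc]
    linarith

/-- Solution of the interim reduced problem for limited premium transfers
(problem (R-Int) with α=0, β=1): minimizing `w·X + l·(1-X)` subject to
`w ≥ l`, `w·Xmin + l·(1-Xmin) = U0`, `l ≤ K`. If `U0 ≤ K` the unique minimizer
is full insurance `(U0, U0)`; if `U0 > K` and `Xmin > 0` the unique minimizer is
`l* = K`, `w* = (U0 - K(1-Xmin))/Xmin`. -/
theorem reduced_problem_limited_premium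
    (Xmin X U0 K : ℝ)
    (h0 : 0 ≤ Xmin) (h1 : Xmin < X) (h2 : X ≤ 1) (hU0 : 0 ≤ U0) (hK : 0 ≤ K) :
    (U0 ≤ K →
      ((U0 ≥ U0 ∧ U0 * Xmin + U0 * (1 - Xmin) = U0 ∧ U0 ≤ K) ∧
        ∀ w l : ℝ, w ≥ l → w * Xmin + l * (1 - Xmin) = U0 → l ≤ K →
          (U0 * X + U0 * (1 - X) ≤ w * X + l * (1 - X) ∧
            (w * X + l * (1 - X) = U0 * X + U0 * (1 - X) → w = U0 ∧ l = U0)))) ∧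
    (K < U0 → 0 < Xmin →
      (((U0 - K * (1 - Xmin)) / Xmin ≥ K ∧
          ((U0 - K * (1 - Xmin)) / Xmin) * Xmin + K * (1 - Xmin) = U0 ∧ K ≤ K) ∧
        ∀ w l : ℝ, w ≥ l → w * Xmin + l * (1 - Xmin) = U0 → l ≤ K →
          (((U0 - K * (1 - Xmin)) / Xmin) * X + K * (1 - X) ≤ w * X + l * (1 - X) ∧
            (w * X + l * (1 - X) = ((U0 - K * (1 - Xmin)) / Xmin) * X + K * (1 - X) →
              w = (U0 - K * (1 - Xmin)) / Xmin ∧ l = K)))) :=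
  reduced_problem_limited_premium_general Xmin X U0 K h1
end

section
/- Let $0<X^{\min}<X<1$ and $U_0\ge 0$ be constants. Among all pairs $(w,l)$ with $w\ge l$ and $wX^{\min}+l(1-X^{\min})=U_0$, the objective $wX + l(1-X)$ is strictly increasing in $w-l$: if $(w_1,l_1)$ and $(w_2,l_2)$ both satisfy the constraints and $w_1-l_1 < w_2-l_2$, then $w_1X+l_1(1-X) < w_2X+l_2(1-X)$. -/
theorem mul_add_mul_one_sub_eq_add_sub_mul {R : Type*} [CommRing R] (w l x y : R) :
    w * x + l * (1 - x) = w * y + l * (1 - y) + (w - l) * (x - y) := by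
  ring

theorem objective_strictMono_in_spread_general
    (Xmin X U0 : ℝ) (h1 : Xmin < X)
    (w1 l1 w2 l2 : ℝ)
    (hf1 : w1 ≥ l1 ∧ w1 * Xmin + l1 * (1 - Xmin) = U0)
    (hf2 : w2 ≥ l2 ∧ w2 * Xmin + l2 * (1 - Xmin) = U0)
    (hlt : w1 - l1 < w2 - l2) :
    w1 * X + l1 * (1 - X) < w2 * X + l2 * (1 - X) := by
  rw [mul_add_mul_one_sub_eq_add_sub_mul w1 l1 X Xmin,
    mul_add_mul_one_sub_eq_add_sub_mul w2 l2 X Xmin, hf1.2, hf2.2]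
  exact add_lt_add_right (mul_lt_mul_of_pos_right hlt (sub_pos.2 h1)) U0

/-- Holding the worst-case utility fixed, the seller's cost is strictly
increasing in the spread between winning and losing payoffs: if two pairs
`(w₁,l₁)`, `(w₂,l₂)` satisfy `w ≥ l` and `w·Xmin + l·(1-Xmin) = U0`, and
`w₁ - l₁ < w₂ - l₂`, then `w₁·X + l₁·(1-X) < w₂·X + l₂·(1-X)`. -/
theorem objective_strictMono_in_spread
    (Xmin X U0 : ℝ) (h0 : 0 < Xmin) (h1 : Xmin < X) (h2 : X < 1) (hU0 : 0 ≤ U0)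
    (w1 l1 w2 l2 : ℝ)
    (hf1 : w1 ≥ l1 ∧ w1 * Xmin + l1 * (1 - Xmin) = U0)
    (hf2 : w2 ≥ l2 ∧ w2 * Xmin + l2 * (1 - Xmin) = U0)
    (hlt : w1 - l1 < w2 - l2) :
    w1 * X + l1 * (1 - X) < w2 * X + l2 * (1 - X) :=
  objective_strictMono_in_spread_general Xmin X U0 h1 w1 l1 w2 l2 hf1 hf2 hlt
end

section
/- Let $\psi:[\underline\theta,\bar\theta]\to\mathbb{R}$ be strictly increasing and continuous, and let $r^*=\sup\{\theta : \psi(\theta)\le 0\}$ (with $r^*=\underline\theta$ if the set is empty). Then among all measurable functions $x=(x_1,x_2):\Theta^2\to[0,1]^2$ with $x_1(\theta,\theta')+x_2(\theta',\theta)\le 1$, the allocation $x^*$ that gives the object to bidder $i$ iff her type is highest and at least $r^*$ (splitting ties equally, no sale if both types are below $r^*$) maximizes $\int_{\Theta^2}[\psi(\theta_1)x_1(\theta_1,\theta_2)+\psi(\theta_2)x_2(\theta_2,\theta_1)]\,dP^2(\theta_1,\theta_2)$, where $P$ is atomless with full support on $\Theta=[\underline\theta,\bar\theta]$. -/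
/-!
Pointwise, feasibility (`x₁, x₂ ≥ 0`, `x₁ + x₂ ≤ 1`) bounds the virtual surplus
`ψ θ₁ * x₁ + ψ θ₂ * x₂` by `max 0 (max (ψ θ₁) (ψ θ₂))`. Since `ψ` is strictly increasing on
`[a, b]` and changes sign at `r*`, the cutoff allocation attains this bound at every profile with
`θ₁ ≠ θ₂` and `θ₁, θ₂ ≠ r*`. As `P` is atomless, these profiles carry full `P ⊗ P`-measure, so
integrating the pointwise bound gives the claim.
-/

open MeasureTheory Set

section Cutoff

variable {a b θ : ℝ} {ψ : ℝ → ℝ}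

noncomputable def cutoffType (a b : ℝ) (ψ : ℝ → ℝ) : ℝ :=
  sSup (insert a {θ ∈ Icc a b | ψ θ ≤ 0})

theorem neg_of_lt_cutoffType (hψ : StrictMonoOn ψ (Icc a b)) (hθ : θ ∈ Icc a b)
    (h : θ < cutoffType a b ψ) : ψ θ < 0 := by
  by_contra! hψθ
  refine h.not_ge (csSup_le (insert_nonempty _ _) ?_)
  rintro x (rfl | ⟨hx, hψx⟩)
  · exact hθ.1
  · by_contra! hθx
    exact (hψθ.trans_lt (hψ hθ hx hθx)).not_ge hψx

theorem pos_of_cutoffType_lt (hθ : θ ∈ Icc a b) (h : cutoffType a b ψ < θ) : 0 < ψ θ := by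
  by_contra! hψθ
  have hbdd : BddAbove (insert a {θ ∈ Icc a b | ψ θ ≤ 0}) := by
    refine ⟨b, ?_⟩
    rintro x (rfl | hx)
    exacts [hθ.1.trans hθ.2, hx.1.2]
  exact h.not_ge (le_csSup hbdd (mem_insert_of_mem _ ⟨hθ, hψθ⟩))

end Cutoff

section Allocation

variable {r θ θ' : ℝ}

noncomputable def cutoffAllocation (r θ θ' : ℝ) : ℝ :=
  if θ' < θ ∧ r ≤ θ then 1 else if θ' = θ ∧ r ≤ θ then 1 / 2 else 0

theorem cutoffAllocation_mem_Icc : cutoffAllocation r θ θ' ∈ Icc 0 1 := by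
  unfold cutoffAllocation
  split_ifs <;> norm_num

theorem measurable_cutoffAllocation : Measurable (Function.uncurry (cutoffAllocation r)) := by
  refine Measurable.ite ?_ measurable_const (Measurable.ite ?_ measurable_const measurable_const)
  · exact (measurableSet_lt measurable_snd measurable_fst).inter (measurable_fst measurableSet_Ici)
  · exact (measurableSet_eq_fun measurable_snd measurable_fst).inter
      (measurable_fst measurableSet_Ici)

theorem cutoffAllocation_of_lt (h : θ' < θ) :
    cutoffAllocation r θ θ' = if r ≤ θ then 1 else 0 := by
  by_cases hr : r ≤ θ <;> simp [cutoffAllocation, h, hr]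

theorem cutoffAllocation_of_gt (h : θ < θ') : cutoffAllocation r θ θ' = 0 := by
  simp [cutoffAllocation, h.not_gt, h.ne']

end Allocation

section VirtualSurplus

variable {a b θ₁ θ₂ : ℝ} {ψ : ℝ → ℝ} {x₁ x₂ : ℝ → ℝ → ℝ}

def virtualSurplus (ψ : ℝ → ℝ) (x₁ x₂ : ℝ → ℝ → ℝ) (p : ℝ × ℝ) : ℝ :=
  ψ p.1 * x₁ p.1 p.2 + ψ p.2 * x₂ p.2 p.1

theorem virtualSurplus_swap (x : ℝ → ℝ → ℝ) (p : ℝ × ℝ) :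
    virtualSurplus ψ x x p.swap = virtualSurplus ψ x x p :=
  add_comm _ _

theorem mul_add_mul_le_max_zero_max {u v x y : ℝ} (hx : 0 ≤ x) (hy : 0 ≤ y) (hxy : x + y ≤ 1) :
    u * x + v * y ≤ max 0 (max u v) := by
  set M := max 0 (max u v)
  have hM : 0 ≤ M := le_max_left _ _
  calc u * x + v * y ≤ M * x + M * y := by
        gcongr
        exacts [(le_max_left u v).trans (le_max_right _ _),
          (le_max_right u v).trans (le_max_right _ _)]
    _ = M * (x + y) := by ring
    _ ≤ M := mul_le_of_le_one_right hM hxy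

theorem virtualSurplus_cutoffAllocation_of_lt (hψ : StrictMonoOn ψ (Icc a b))
    (h₁ : θ₁ ∈ Icc a b) (h₂ : θ₂ ∈ Icc a b) (h₂₁ : θ₂ < θ₁) (hr₁ : θ₁ ≠ cutoffType a b ψ) :
    virtualSurplus ψ (cutoffAllocation (cutoffType a b ψ)) (cutoffAllocation (cutoffType a b ψ))
      (θ₁, θ₂) = max 0 (max (ψ θ₁) (ψ θ₂)) := by
  have hψ₂₁ : ψ θ₂ < ψ θ₁ := hψ h₂ h₁ h₂₁
  simp only [virtualSurplus, cutoffAllocation_of_lt h₂₁, cutoffAllocation_of_gt h₂₁, mul_zero,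
    add_zero, max_eq_left hψ₂₁.le]
  rcases hr₁.lt_or_gt with hlt | hgt
  · have hneg := neg_of_lt_cutoffType hψ h₁ hlt
    rw [if_neg hlt.not_ge, mul_zero, max_eq_left hneg.le]
  · rw [if_pos hgt.le, mul_one, max_eq_right (pos_of_cutoffType_lt h₁ hgt).le]

theorem virtualSurplus_cutoffAllocation (hψ : StrictMonoOn ψ (Icc a b))
    (h₁ : θ₁ ∈ Icc a b) (h₂ : θ₂ ∈ Icc a b) (h₁₂ : θ₁ ≠ θ₂)
    (hr₁ : θ₁ ≠ cutoffType a b ψ) (hr₂ : θ₂ ≠ cutoffType a b ψ) :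
    virtualSurplus ψ (cutoffAllocation (cutoffType a b ψ)) (cutoffAllocation (cutoffType a b ψ))
      (θ₁, θ₂) = max 0 (max (ψ θ₁) (ψ θ₂)) := by
  rcases h₁₂.lt_or_gt with hlt | hgt
  · rw [← virtualSurplus_swap, Prod.swap_prod_mk, max_comm (ψ θ₁)]
    exact virtualSurplus_cutoffAllocation_of_lt hψ h₂ h₁ hlt hr₂
  · exact virtualSurplus_cutoffAllocation_of_lt hψ h₁ h₂ hgt hr₁

theorem integrable_virtualSurplus {μ : Measure (ℝ × ℝ)} [IsFiniteMeasure μ]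
    (hψ : MonotoneOn ψ (Icc a b)) (hψm : Measurable ψ)
    (hμ : ∀ᵐ p ∂μ, p.1 ∈ Icc a b ∧ p.2 ∈ Icc a b)
    (hm₁ : Measurable (Function.uncurry x₁)) (hm₂ : Measurable (Function.uncurry x₂))
    (hx₁ : ∀ θ θ', x₁ θ θ' ∈ Icc 0 1) (hx₂ : ∀ θ θ', x₂ θ θ' ∈ Icc 0 1) :
    Integrable (virtualSurplus ψ x₁ x₂) μ := by
  set C := max |ψ a| |ψ b|
  have hC : ∀ θ ∈ Icc a b, |ψ θ| ≤ C := fun θ hθ =>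
    abs_le_max_abs_abs (hψ ⟨le_rfl, hθ.1.trans hθ.2⟩ hθ hθ.1)
      (hψ hθ ⟨hθ.1.trans hθ.2, le_rfl⟩ hθ.2)
  have hterm : ∀ θ ∈ Icc a b, ∀ x ∈ Icc (0 : ℝ) 1, |ψ θ * x| ≤ C := fun θ hθ x hx => by
    rw [abs_mul, abs_of_nonneg hx.1]
    exact (mul_le_of_le_one_right (abs_nonneg _) hx.2).trans (hC θ hθ)
  have hmeas : Measurable (virtualSurplus ψ x₁ x₂) :=
    ((hψm.comp measurable_fst).mul hm₁).add
      ((hψm.comp measurable_snd).mul (hm₂.comp measurable_swap))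
  refine (integrable_const (C + C)).mono' hmeas.aestronglyMeasurable ?_
  filter_upwards [hμ] with p ⟨h₁, h₂⟩
  exact (abs_add_le _ _).trans
    (add_le_add (hterm _ h₁ _ (hx₁ _ _)) (hterm _ h₂ _ (hx₂ _ _)))

end VirtualSurplus

theorem ae_fst_ne_snd {α : Type*} [MeasurableSpace α] [MeasurableEq α] (μ ν : Measure α)
    [SFinite ν] [NullSingletonClass ν] : ∀ᵐ p ∂μ.prod ν, p.1 ≠ p.2 :=
  (Measure.ae_prod_iff_ae_ae (measurableSet_eq_fun measurable_fst measurable_snd).compl).2 <|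
    ae_of_all _ fun x => (Measure.ae_ne ν x).mono fun _ h => h.symm

theorem cutoff_allocation_optimal_general
    (a b : ℝ) (P : Measure ℝ) [IsProbabilityMeasure P] [NullSingletonClass P]
    (hsupp : P (Set.Icc a b)ᶜ = 0)
    (ψ : ℝ → ℝ) (hψmeas : Measurable ψ)
    (hψmono : StrictMonoOn ψ (Set.Icc a b))
    (r : ℝ) (hr : r = sSup (insert a {θ ∈ Set.Icc a b | ψ θ ≤ 0}))
    (xs : ℝ → ℝ → ℝ)
    (hxs : ∀ θ θ' : ℝ, xs θ θ' =
      if θ' < θ ∧ r ≤ θ then 1 else if θ' = θ ∧ r ≤ θ then 1 / 2 else 0)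
    (x1 x2 : ℝ → ℝ → ℝ)
    (hm1 : Measurable (Function.uncurry x1)) (hm2 : Measurable (Function.uncurry x2))
    (hpos : ∀ θ θ', 0 ≤ x1 θ θ' ∧ 0 ≤ x2 θ θ')
    (hsum : ∀ θ θ', x1 θ θ' + x2 θ' θ ≤ 1) :
    ∫ p, (ψ p.1 * x1 p.1 p.2 + ψ p.2 * x2 p.2 p.1) ∂(P.prod P)
      ≤ ∫ p, (ψ p.1 * xs p.1 p.2 + ψ p.2 * xs p.2 p.1) ∂(P.prod P) := by
  obtain rfl : xs = cutoffAllocation r := funext fun θ => funext (hxs θ)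
  obtain rfl : r = cutoffType a b ψ := hr
  have hx₁ : ∀ θ θ', x1 θ θ' ∈ Icc 0 1 := fun θ θ' =>
    ⟨(hpos θ θ').1, by linarith [hsum θ θ', (hpos θ' θ).2]⟩
  have hx₂ : ∀ θ θ', x2 θ θ' ∈ Icc 0 1 := fun θ θ' =>
    ⟨(hpos θ θ').2, by linarith [hsum θ' θ, (hpos θ' θ).1]⟩
  have hP : ∀ᵐ θ ∂P, θ ∈ Icc a b ∧ θ ≠ cutoffType a b ψ :=
    (show ∀ᵐ θ ∂P, θ ∈ Icc a b from mem_ae_iff.2 hsupp).and (Measure.ae_ne P _)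
  have hP₁ : ∀ᵐ p ∂P.prod P, p.1 ∈ Icc a b ∧ p.1 ≠ cutoffType a b ψ :=
    Measure.quasiMeasurePreserving_fst.ae hP
  have hP₂ : ∀ᵐ p ∂P.prod P, p.2 ∈ Icc a b ∧ p.2 ≠ cutoffType a b ψ :=
    Measure.quasiMeasurePreserving_snd.ae hP
  have hbox : ∀ᵐ p ∂P.prod P, p.1 ∈ Icc a b ∧ p.2 ∈ Icc a b := by
    filter_upwards [hP₁, hP₂] with p h₁ h₂ using ⟨h₁.1, h₂.1⟩
  refine integral_mono_ae
    (integrable_virtualSurplus hψmono.monotoneOn hψmeas hbox hm1 hm2 hx₁ hx₂)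
    (integrable_virtualSurplus hψmono.monotoneOn hψmeas hbox measurable_cutoffAllocation
      measurable_cutoffAllocation (fun _ _ => cutoffAllocation_mem_Icc)
      (fun _ _ => cutoffAllocation_mem_Icc)) ?_
  filter_upwards [hP₁, hP₂, ae_fst_ne_snd P P] with p ⟨h₁, hr₁⟩ ⟨h₂, hr₂⟩ h₁₂
  calc _ ≤ max 0 (max (ψ p.1) (ψ p.2)) :=
        mul_add_mul_le_max_zero_max (hpos _ _).1 (hpos _ _).2 (hsum _ _)
    _ = _ := (virtualSurplus_cutoffAllocation hψmono h₁ h₂ h₁₂ hr₁ hr₂).symm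

/-- Optimality of the cutoff allocation rule (Proposition 6): for a strictly
increasing continuous virtual value `ψ` and an atomless type distribution `P`
supported on `[a,b]`, the allocation giving the object to the bidder with the
highest type provided it is at least `r* = sup{θ : ψ(θ) ≤ 0}` (ties split
equally, no sale below `r*`) maximizes the expected virtual surplus among all
feasible allocation rules. -/
theorem cutoff_allocation_optimal
    (a b : ℝ) (hab : a < b) (P : Measure ℝ) [IsProbabilityMeasure P] [NullSingletonClass P]
    (hsupp : P (Set.Icc a b)ᶜ = 0)
    (ψ : ℝ → ℝ) (hψmeas : Measurable ψ)
    (hψmono : StrictMonoOn ψ (Set.Icc a b)) (hψcont : ContinuousOn ψ (Set.Icc a b))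
    (r : ℝ) (hr : r = sSup (insert a {θ ∈ Set.Icc a b | ψ θ ≤ 0}))
    (xs : ℝ → ℝ → ℝ)
    (hxs : ∀ θ θ' : ℝ, xs θ θ' =
      if θ' < θ ∧ r ≤ θ then 1 else if θ' = θ ∧ r ≤ θ then 1 / 2 else 0)
    (x1 x2 : ℝ → ℝ → ℝ)
    (hm1 : Measurable (Function.uncurry x1)) (hm2 : Measurable (Function.uncurry x2))
    (hpos : ∀ θ θ', 0 ≤ x1 θ θ' ∧ 0 ≤ x2 θ θ')
    (hsum : ∀ θ θ', x1 θ θ' + x2 θ' θ ≤ 1) :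
    ∫ p, (ψ p.1 * x1 p.1 p.2 + ψ p.2 * x2 p.2 p.1) ∂(P.prod P)
      ≤ ∫ p, (ψ p.1 * xs p.1 p.2 + ψ p.2 * xs p.2 p.1) ∂(P.prod P) :=
  cutoff_allocation_optimal_general a b P hsupp ψ hψmeas hψmono r hr xs hxs x1 x2 hm1 hm2 hpos hsum
end
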